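/- arXiv:1903.09844 — 2 statements merged into one kernel-verified Lean document; each statement's English description precedes it below -/
import Mathlib

section
/- Let the sequence (α_k) be defined by α_1 = 1/(2L) and, for k ≥ 1, the relation A_{k+1} = A_k + α_{k+1} = 2L α_{k+1}^2 where A_k = ∑_{i=1}^k α_i and L > 0. Then for all k ≥ 0, α_{k+1} ≤ (k+2)/(2L). -/
/-! With `A_k = ∑_{i ≤ k} α_i`, the relation `A_k = 2L α_k²` also holds at `k = 1`, so subtracting
consecutive instances gives `2L (α_{k+1} - α_k)(α_{k+1} + α_k) = α_{k+1} ≤ α_{k+1} + α_k`.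
Hence each step raises `α` by at most `1/(2L)`, and `α_{k+1} ≤ (k+1)/(2L)`. -/

open Finset

lemma le_add_one_div_of_mul_sq_eq {c x y : ℝ} (hc : 0 < c) (hy : 0 ≤ y)
    (h : c * x ^ 2 = c * y ^ 2 + x) : x ≤ y + 1 / c := by
  rw [← sub_le_iff_le_add', le_div_iff₀ hc]
  by_contra! hgt
  have hsum : 0 < x + y := by nlinarith
  nlinarith [mul_lt_mul_of_pos_right hgt hsum]

lemma sum_Icc_one_eq_mul_sq {c : ℝ} (hc : 0 < c) {α : ℕ → ℝ} (h1 : α 1 = 1 / c)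
    (hrec : ∀ k : ℕ, 1 ≤ k → ∑ i ∈ Icc 1 (k + 1), α i = c * α (k + 1) ^ 2) :
    ∀ k : ℕ, 1 ≤ k → ∑ i ∈ Icc 1 k, α i = c * α k ^ 2
  | 1, _ => by rw [Icc_self, sum_singleton, h1]; field_simp
  | k + 2, _ => hrec (k + 1) (by omega)

lemma succ_le_add_one_div {c : ℝ} (hc : 0 < c) {α : ℕ → ℝ} (hpos : ∀ k, 1 ≤ k → 0 < α k)
    (h1 : α 1 = 1 / c)
    (hrec : ∀ k : ℕ, 1 ≤ k → ∑ i ∈ Icc 1 (k + 1), α i = c * α (k + 1) ^ 2) (k : ℕ) :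
    α (k + 2) ≤ α (k + 1) + 1 / c := by
  refine le_add_one_div_of_mul_sq_eq hc (hpos _ le_add_self).le ?_
  rw [← sum_Icc_one_eq_mul_sq hc h1 hrec (k + 1) le_add_self, ← hrec (k + 1) le_add_self,
    sum_Icc_succ_top (by omega)]

/-- Let `α` be a sequence of positive reals with `α 1 = 1/(2L)` and, for `k ≥ 1`,
`∑_{i=1}^{k+1} α i = 2 L (α (k+1))²`.  Then for all `k ≥ 0`, `α (k+1) ≤ (k+2)/(2L)`. -/
theorem stmt_0 (L : ℝ) (hL : 0 < L) (α : ℕ → ℝ)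
    (hpos : ∀ k, 1 ≤ k → 0 < α k)
    (h1 : α 1 = 1 / (2 * L))
    (hrec : ∀ k : ℕ, 1 ≤ k → ∑ i ∈ Finset.Icc 1 (k + 1), α i = 2 * L * (α (k + 1)) ^ 2) :
    ∀ k : ℕ, α (k + 1) ≤ (k + 2) / (2 * L) := by
  have hc : 0 < 2 * L := by positivity
  have hlin : ∀ k : ℕ, α (k + 1) ≤ (k + 1) / (2 * L) := by
    intro k
    induction k with
    | zero => simp [h1]
    | succ k ih =>
      calc α (k + 2) ≤ α (k + 1) + 1 / (2 * L) := succ_le_add_one_div hc hpos h1 hrec k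
        _ ≤ (k + 1) / (2 * L) + 1 / (2 * L) := by gcongr
        _ = ((k + 1 : ℕ) + 1) / (2 * L) := by push_cast; ring
  intro k
  exact (hlin k).trans (by gcongr; norm_num)
end

section
/- If a sequence of nonnegative reals satisfies R_l² ≤ 2ud ( 2A + ud ∑_{k=0}^{l-2} R_k² + E·l(l+3) ) for all 1 ≤ l ≤ N, where ud ≥ 1 and A, E ≥ 0, then R_l² ≤ (2A + ud R_0² + E·l(l+3)) (2ud)^l for all 1 ≤ l ≤ N. -/
/-! With `F = 2A + E l(l+3)` fixed at the final index `l` and `G m = F + ud ∑_{k<m} R_k²`, the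
hypothesis gives `G (m+2) = G (m+1) + ud R_{m+1}² ≤ G (m+1) + ud (2ud) G m`. Since `1 + ud ≤ 2ud`,
this two-step recurrence propagates `G m ≤ G 1 (2ud)^m`, and then `R_l² ≤ 2ud G (l-1)`. -/

theorem le_mul_pow_of_le_add_mul {g : ℕ → ℝ} {a c : ℝ} {L : ℕ} (ha : 0 ≤ a) (hac : 1 + a ≤ c)
    (h₀ : g 0 ≤ g 1) (h₁ : 0 ≤ g 1)
    (hg : ∀ m, m + 2 ≤ L → g (m + 2) ≤ g (m + 1) + a * c * g m) :
    ∀ m ≤ L, g m ≤ g 1 * c ^ m := by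
  have hc : 1 ≤ c := by linarith
  intro m
  induction m using Nat.twoStepInduction with
  | zero => simpa using h₀
  | one => simpa using fun _ ↦ le_mul_of_one_le_right h₁ hc
  | more m ih₀ ih₁ =>
    intro hm
    calc g (m + 2) ≤ g (m + 1) + a * c * g m := hg m hm
      _ ≤ g 1 * c ^ (m + 1) + a * c * (g 1 * c ^ m) := by
        have : 0 ≤ a * c := by positivity
        gcongr ?_ + a * c * ?_
        exacts [ih₁ (by omega), ih₀ (by omega)]
      _ = g 1 * c ^ (m + 1) * (1 + a) := by ring
      _ ≤ g 1 * c ^ (m + 1) * c := by gcongr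
      _ = g 1 * c ^ (m + 2) := by ring

theorem stmt_13_general (ud A E : ℝ) (hud : 1 ≤ ud) (hA : 0 ≤ A) (hE : 0 ≤ E)
    (N : ℕ) (R : ℕ → ℝ)
    (h : ∀ l : ℕ, 1 ≤ l → l ≤ N →
      (R l) ^ 2 ≤ 2 * ud * (2 * A + ud * ∑ k ∈ Finset.range (l - 1), (R k) ^ 2
        + E * (l : ℝ) * ((l : ℝ) + 3))) :
    ∀ l : ℕ, 1 ≤ l → l ≤ N →
      (R l) ^ 2 ≤ (2 * A + ud * (R 0) ^ 2 + E * (l : ℝ) * ((l : ℝ) + 3)) * (2 * ud) ^ l := by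
  intro l hl hlN
  set G : ℕ → ℝ := fun m ↦ 2 * A + E * l * (l + 3) + ud * ∑ k ∈ Finset.range m, R k ^ 2
  have hsq : ∀ k, 1 ≤ k → k ≤ l → R k ^ 2 ≤ 2 * ud * G (k - 1) := by
    intro k hk hkl
    have hEk : E * k * (k + 3) ≤ E * l * (l + 3) := by
      have : (k : ℝ) ≤ l := by exact_mod_cast hkl
      gcongr
    nlinarith [h k hk (hkl.trans hlN)]
  have hG : ∀ m ≤ l, G m ≤ G 1 * (2 * ud) ^ m := by
    refine le_mul_pow_of_le_add_mul (a := ud) (c := 2 * ud) (by linarith) (by linarith) ?_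
      (by positivity) fun m hm ↦ ?_
    · simp only [G, Finset.sum_range_one, Finset.sum_range_zero]
      nlinarith [sq_nonneg (R 0)]
    · have := hsq (m + 1) (by omega) (by omega)
      simp only [G, Nat.add_sub_cancel, Finset.sum_range_succ _ (m + 1)] at this ⊢
      nlinarith
  calc R l ^ 2 ≤ 2 * ud * G (l - 1) := hsq l hl le_rfl
    _ ≤ 2 * ud * (G 1 * (2 * ud) ^ (l - 1)) := by gcongr; exact hG _ (by omega)
    _ = G 1 * (2 * ud) ^ l := by rw [mul_left_comm, ← pow_succ', Nat.sub_add_cancel hl]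
    _ = _ := by simp only [G, Finset.sum_range_one]; ring

/-- Unrolling the recurrence: if `R_l² ≤ 2ud(2A + ud ∑_{k=0}^{l-2} R_k² + E l(l+3))`
for `1 ≤ l ≤ N`, with `ud ≥ 1`, then `R_l² ≤ (2A + ud R_0² + E l(l+3))(2ud)^l`. -/
theorem stmt_13 (ud A E : ℝ) (hud : 1 ≤ ud) (hA : 0 ≤ A) (hE : 0 ≤ E)
    (N : ℕ) (R : ℕ → ℝ) (hR : ∀ k, 0 ≤ R k)
    (h : ∀ l : ℕ, 1 ≤ l → l ≤ N →
      (R l) ^ 2 ≤ 2 * ud * (2 * A + ud * ∑ k ∈ Finset.range (l - 1), (R k) ^ 2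
        + E * (l : ℝ) * ((l : ℝ) + 3))) :
    ∀ l : ℕ, 1 ≤ l → l ≤ N →
      (R l) ^ 2 ≤ (2 * A + ud * (R 0) ^ 2 + E * (l : ℝ) * ((l : ℝ) + 3)) * (2 * ud) ^ l :=
  stmt_13_general ud A E hud hA hE N R h
end
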